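/- arXiv:0810.0728 — 4 statements merged into one kernel-verified Lean document; each statement's English description precedes it below -/
import Mathlib

section
/- Let R be a polynomial ring over a field and let I be a nonzero proper homogeneous ideal of R. Then for positive integers r and m, the r-th ordinary power I^r is contained in the m-th symbolic power I^(m) if and only if r ≥ m. -/
open MvPolynomial

/-- The complement of the union of the associated primes of `R/I`. -/
def symbolicCompl {R : Type*} [CommRing R] (I : Ideal R) : Submonoid R where
  carrier := {r | ∀ P ∈ associatedPrimes R (R ⧸ I), r ∉ P}
  one_mem' := fun P hP h1 => hP.isPrime.ne_top (Ideal.eq_top_iff_one P |>.mpr h1)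
  mul_mem' := by
    intro a b ha hb P hP hab
    rcases hP.isPrime.mem_or_mem hab with h | h
    · exact ha P hP h
    · exact hb P hP h

/-- The `m`-th symbolic power of `I`. -/
noncomputable def symbolicPower {R : Type*} [CommRing R] (I : Ideal R) (m : ℕ) : Ideal R :=
  (Ideal.map (algebraMap R (Localization (symbolicCompl I))) (I ^ m)).comap
    (algebraMap R (Localization (symbolicCompl I)))

/-- A homogeneous ideal: one containing all homogeneous components of its elements. -/
def IsHomogIdeal {k : Type*} [Field k] {n : ℕ} (I : Ideal (MvPolynomial (Fin n) k)) : Prop :=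
  ∀ f ∈ I, ∀ t : ℕ, MvPolynomial.homogeneousComponent t f ∈ I

/-!
Localize at the complement `U` of the associated primes of `R/I`, so that `I^r ⊆ I^(m)` becomes
`J^r ⊆ J^m` for `J = I R_U`. Since `I` lies in an associated prime, `J` is proper, and it is
nonzero because `R_U` is a localization of a domain. In the Noetherian domain `R_U`, if `r < m`
then `J^r = J^(r+1)`, so `J^r` lies in every power of `J` and vanishes by Krull's intersection
theorem, which is absurd.
-/

theorem Ideal.pow_le_pow_right_iff {R : Type*} [CommRing R] [IsNoetherianRing R] [IsDomain R]
    {J : Ideal R} (h0 : J ≠ ⊥) (h1 : J ≠ ⊤) {r m : ℕ} : J ^ r ≤ J ^ m ↔ m ≤ r := by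
  refine ⟨fun h => ?_, Ideal.pow_le_pow_right⟩
  by_contra! hlt
  have hsucc : J ^ (r + 1) = J ^ r :=
    le_antisymm (Ideal.pow_le_pow_right r.le_succ) (h.trans (Ideal.pow_le_pow_right hlt))
  have hstable : ∀ k, J ^ (r + k) = J ^ r := by
    intro k
    induction k with
    | zero => rfl
    | succ k ih => rw [← add_assoc, pow_succ, ih, ← pow_succ, hsucc]
  have hbot : J ^ r = ⊥ := by
    refine eq_bot_iff.mpr ((le_iInf fun n => ?_).trans (Ideal.iInf_pow_eq_bot_of_isDomain J h1).le)
    rw [← hstable n]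
    exact Ideal.pow_le_pow_right (Nat.le_add_left n r)
  exact pow_ne_zero r h0 hbot

section SymbolicPower

variable {R : Type*} [CommRing R]

theorem le_of_mem_associatedPrimes_quotient {I P : Ideal R}
    (hP : P ∈ associatedPrimes R (R ⧸ I)) : I ≤ P := by
  simpa [Submodule.annihilator_top, Ideal.annihilator_quotient] using hP.annihilator_le

theorem disjoint_symbolicCompl [IsNoetherianRing R] {I : Ideal R} (hI : I ≠ ⊤) :
    Disjoint (symbolicCompl I : Set R) I := by
  have : Nontrivial (R ⧸ I) := Ideal.Quotient.nontrivial_iff.mpr hI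
  obtain ⟨P, hP⟩ := associatedPrimes.nonempty R (R ⧸ I)
  exact Set.disjoint_left.mpr fun s hs hsI => hs P hP (le_of_mem_associatedPrimes_quotient hP hsI)

theorem symbolicCompl_le_nonZeroDivisors [IsNoetherianRing R] [IsDomain R] {I : Ideal R}
    (hI : I ≠ ⊤) : symbolicCompl I ≤ nonZeroDivisors R :=
  le_nonZeroDivisors_of_noZeroDivisors fun h0 =>
    Set.disjoint_left.mp (disjoint_symbolicCompl hI) h0 I.zero_mem

end SymbolicPower

theorem power_le_symbolicPower_iff_general {k : Type*} [Field k] {N : ℕ}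
    (I : Ideal (MvPolynomial (Fin (N + 1)) k))
    (hne : I ≠ ⊥) (hproper : I ≠ ⊤)
    (r m : ℕ) :
    I ^ r ≤ symbolicPower I m ↔ m ≤ r := by
  let L := Localization (symbolicCompl I)
  have hU := symbolicCompl_le_nonZeroDivisors hproper
  have : IsDomain L := IsLocalization.isDomain_localization hU
  have : IsNoetherianRing L := IsLocalization.isNoetherianRing (symbolicCompl I) L inferInstance
  have hJ0 : I.map (algebraMap _ L) ≠ ⊥ := by
    rwa [ne_eq, Ideal.map_eq_bot_iff_of_injective (IsLocalization.injective L hU)]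
  have hJ1 : I.map (algebraMap _ L) ≠ ⊤ :=
    (IsLocalization.map_algebraMap_ne_top_iff_disjoint _ L I).mpr (disjoint_symbolicCompl hproper)
  rw [symbolicPower, ← Ideal.map_le_iff_le_comap, Ideal.map_pow, Ideal.map_pow]
  exact Ideal.pow_le_pow_right_iff hJ0 hJ1

/-- For a nonzero proper homogeneous ideal `I` in a polynomial ring over a field,
`I^r ⊆ I^{(m)}` if and only if `r ≥ m`. -/
theorem power_le_symbolicPower_iff {k : Type*} [Field k] {N : ℕ}
    (I : Ideal (MvPolynomial (Fin (N + 1)) k))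
    (hne : I ≠ ⊥) (hproper : I ≠ ⊤) (hhom : IsHomogIdeal I)
    (r m : ℕ) (hr : 0 < r) (hm : 0 < m) :
    I ^ r ≤ symbolicPower I m ↔ m ≤ r :=
  power_le_symbolicPower_iff_general I hne hproper r m
end

section
/- In characteristic p > 0, for ideals J_1, J_2 in a ring R and q = p^t a power of p, the Frobenius power commutes with intersection: (J_1 ∩ J_2)^[q] = J_1^[q] ∩ J_2^[q], where J^[q] denotes the ideal generated by the q-th powers of the elements of J, provided the Frobenius endomorphism of R is flat (e.g. R a polynomial ring over a perfect field). -/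
/-!
Frobenius powers are extensions of ideals along the iterated Frobenius `x ↦ x ^ p ^ t`, which is
flat when the Frobenius is. Extension along a flat map `R → S` commutes with finite intersections:
tensoring the injection `R ⧸ (I ⊓ J) → R ⧸ I × R ⧸ J` with `S` and identifying `S ⊗ R ⧸ I` with
`S ⧸ I S` shows that `S ⧸ (I ⊓ J) S → S ⧸ I S × S ⧸ J S` is injective.
-/

def frobeniusPower {R : Type*} [CommRing R] (J : Ideal R) (q : ℕ) : Ideal R :=
  Ideal.span ((fun a => a ^ q) '' (J : Set R))

open TensorProduct

theorem Submodule.liftQ_inf_prod_mkQ_injective {R N : Type*} [Ring R] [AddCommGroup N]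
    [Module R N] (P Q : Submodule R N) :
    Function.Injective ((P ⊓ Q).liftQ (P.mkQ.prod Q.mkQ) (by simp [LinearMap.ker_prod])) := by
  rw [← LinearMap.ker_eq_bot]
  exact ker_liftQ_eq_bot _ _ _ (by simp [LinearMap.ker_prod])

section

variable {R M : Type*} [CommRing R] [AddCommGroup M] [Module R M]

theorem TensorProduct.tmul_one_eq_zero_iff_mem_smul_top (I : Ideal R) (x : M) :
    x ⊗ₜ[R] (1 : R ⧸ I) = 0 ↔ x ∈ I • (⊤ : Submodule R M) := by
  rw [← tensorQuotEquivQuotSMul_symm_mk, LinearEquiv.map_eq_zero_iff,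
    Submodule.Quotient.mk_eq_zero]

theorem Module.Flat.inf_smul_top [Module.Flat R M] (I J : Ideal R) :
    (I ⊓ J) • (⊤ : Submodule R M) = I • ⊤ ⊓ J • ⊤ := by
  refine le_antisymm (le_inf (Submodule.smul_mono_left inf_le_left)
    (Submodule.smul_mono_left inf_le_right)) fun x hx => ?_
  obtain ⟨hxI, hxJ⟩ := Submodule.mem_inf.mp hx
  rw [← tmul_one_eq_zero_iff_mem_smul_top] at hxI hxJ ⊢
  apply lTensor_preserves_injective_linearMap _ (I.liftQ_inf_prod_mkQ_injective J)
  apply (prodRight R R M (R ⧸ I) (R ⧸ J)).injective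
  rw [LinearMap.lTensor_tmul, map_zero, map_zero]
  exact congrArg₂ Prod.mk hxI hxJ

end

theorem RingHom.Flat.map_inf {R S : Type*} [CommRing R] [CommRing S] {f : R →+* S} (hf : f.Flat)
    (I J : Ideal R) : (I ⊓ J).map f = I.map f ⊓ J.map f := by
  algebraize [f]
  apply Submodule.restrictScalars_injective R S S
  simpa only [Ideal.smul_top_eq_map, Submodule.restrictScalars_inf,
    RingHom.algebraMap_toAlgebra] using Module.Flat.inf_smul_top (M := S) I J

theorem RingHom.Flat.iterateFrobenius {R : Type*} [CommRing R] {p : ℕ} [ExpChar R p]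
    (hflat : (frobenius R p).Flat) (t : ℕ) : (iterateFrobenius R p t).Flat := by
  induction t with
  | zero => exact iterateFrobenius_zero R p ▸ RingHom.Flat.id R
  | succ n ih => exact iterateFrobenius_add R p n 1 ▸ iterateFrobenius_one R p ▸ hflat.comp ih

theorem frobeniusPower_pow_eq_map_iterateFrobenius {R : Type*} [CommRing R] (p : ℕ)
    [ExpChar R p] (J : Ideal R) (t : ℕ) :
    frobeniusPower J (p ^ t) = J.map (iterateFrobenius R p t) :=
  rfl

theorem frobeniusPower_inf_general {R : Type*} [CommRing R] (p : ℕ)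
    [ExpChar R p] (hflat : (frobenius R p).Flat)
    (J₁ J₂ : Ideal R) (t : ℕ) :
    frobeniusPower (J₁ ⊓ J₂) (p ^ t) = frobeniusPower J₁ (p ^ t) ⊓ frobeniusPower J₂ (p ^ t) := by
  simp only [frobeniusPower_pow_eq_map_iterateFrobenius]
  exact (hflat.iterateFrobenius t).map_inf J₁ J₂

/-- In characteristic `p > 0`, if the Frobenius endomorphism is flat, then Frobenius
powers commute with intersections: `(J₁ ∩ J₂)^[q] = J₁^[q] ∩ J₂^[q]` for `q = p^t`. -/
theorem frobeniusPower_inf {R : Type*} [CommRing R] (p : ℕ) (hp : p.Prime) [CharP R p]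
    [ExpChar R p] (hflat : (frobenius R p).Flat)
    (J₁ J₂ : Ideal R) (t : ℕ) :
    frobeniusPower (J₁ ⊓ J₂) (p ^ t) = frobeniusPower J₁ (p ^ t) ⊓ frobeniusPower J₂ (p ^ t) :=
  frobeniusPower_inf_general p hflat J₁ J₂ t
end

section
/- Let t be the least nonnegative integer such that binom(t+N, N) ≥ j, for integers N ≥ 1 and j ≥ 1. Then t ≤ ceil((N!·j)^{1/N} − 1) ≤ (N!·j)^{1/N}, and hence t + 1 ≤ (N!·j)^{1/N} + 1. -/
/-! With `c = (N!·j)^{1/N}` and `m = ⌈c - 1⌉`, the product `(m+N)(m+N-1)⋯(m+1)` has `N` factors,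
each at least `m + 1 ≥ c`, so `N!·binom(m+N, N) ≥ c^N = N!·j`; hence `t ≤ m`. -/

open Nat

theorem succ_pow_le_factorial_mul_add_choose (m N : ℕ) :
    (m + 1) ^ N ≤ N ! * (m + N).choose N := by
  rw [← Nat.descFactorial_eq_factorial_mul_choose]
  simpa [Nat.add_sub_cancel_right, Nat.add_right_comm m N 1] using
    Nat.pow_sub_le_descFactorial (m + N) N

theorem le_add_choose_of_factorial_mul_le_succ_pow {N j m : ℕ} (h : N ! * j ≤ (m + 1) ^ N) :
    j ≤ (m + N).choose N :=
  Nat.le_of_mul_le_mul_left (h.trans (succ_pow_le_factorial_mul_add_choose m N)) (factorial_pos N)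

theorem sInf_le_of_factorial_mul_le_succ_pow {N j m : ℕ} (h : N ! * j ≤ (m + 1) ^ N) :
    sInf {t : ℕ | j ≤ (t + N).choose N} ≤ m :=
  Nat.sInf_le (le_add_choose_of_factorial_mul_le_succ_pow h)

/-- Regularity estimate for generic points in `P^N`: if `t` is the least natural number
with `binom(t+N,N) ≥ j`, then `t ≤ ⌈(N!·j)^{1/N} − 1⌉ ≤ (N!·j)^{1/N}`, hence
`t + 1 ≤ (N!·j)^{1/N} + 1`. -/
theorem reg_estimate_PN (N j : ℕ) (hN : 1 ≤ N) (hj : 1 ≤ j)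
    (t : ℕ) (ht : t = sInf {t : ℕ | j ≤ (t + N).choose N}) :
    (t : ℤ) ≤ ⌈((N.factorial * j : ℝ)) ^ ((1 : ℝ) / N) - 1⌉ ∧
    (⌈((N.factorial * j : ℝ)) ^ ((1 : ℝ) / N) - 1⌉ : ℝ) ≤ ((N.factorial * j : ℝ)) ^ ((1 : ℝ) / N) ∧
    (t : ℝ) + 1 ≤ ((N.factorial * j : ℝ)) ^ ((1 : ℝ) / N) + 1 := by
  set c : ℝ := ((N ! * j : ℝ)) ^ ((1 : ℝ) / N) with hc
  have hbase : (1 : ℝ) ≤ N ! * j := by exact_mod_cast Nat.one_le_iff_ne_zero.2 (by positivity)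
  have hc1 : 1 ≤ c := Real.one_le_rpow hbase (by positivity)
  have hcN : c ^ N = N ! * j := by
    rw [hc, one_div]; exact Real.rpow_inv_natCast_pow (by linarith) (by omega)
  set m : ℕ := ⌈c - 1⌉₊
  have hm : (m : ℤ) = ⌈c - 1⌉ := Int.natCast_ceil_eq_ceil (by linarith)
  have hcm : c ≤ m + 1 := by linarith [Nat.le_ceil (c - 1)]
  have hmc : (m : ℝ) ≤ c := by linarith [Nat.ceil_lt_add_one (sub_nonneg.2 hc1)]
  have hfact_le : N ! * j ≤ (m + 1) ^ N := by
    exact_mod_cast hcN ▸ pow_le_pow_left₀ (by linarith) hcm N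
  have htm : t ≤ m := ht ▸ sInf_le_of_factorial_mul_le_succ_pow hfact_le
  have hceil : (⌈c - 1⌉ : ℝ) = m := by exact_mod_cast hm.symm
  refine ⟨hm ▸ by exact_mod_cast htm, hceil ▸ hmc, ?_⟩
  have : (t : ℝ) ≤ m := by exact_mod_cast htm
  linarith
end

section
/- Let X be a smooth projective surface, L a nef line bundle on X, D a divisor with negative definite intersection matrix on components D_1,...,D_m, and H ample. If L_0 = H + Σ q_i D_i satisfies L_0 · D_i = 0 for all i, D · D_i ≤ 0 for all i, and ε := min_i q_i/d_i where D = Σ d_i D_i with d_i > 0, then L_0 − cD is nef for all 0 ≤ c ≤ ε. -/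
/-- Panov–Ross nefness claim: on a surface with intersection pairing `β` on the
Néron–Severi space, if `L₀ = H + Σ qᵢ Dᵢ` with `H` ample, `L₀·Dᵢ = 0`, the `Dᵢ` have
negative definite intersection matrix, `D·Dᵢ ≤ 0` where `D = Σ dᵢ Dᵢ` with `dᵢ > 0`,
then `L₀ − cD` is nef (nonnegative against every irreducible curve) for
`0 ≤ c ≤ ε = minᵢ qᵢ/dᵢ`. -/
theorem panov_ross_nef {V : Type*} [AddCommGroup V] [Module ℝ V]
    (β : LinearMap.BilinForm ℝ V) (hsymm : ∀ x y, β x y = β y x)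
    {Curve : Type*} (cls : Curve → V)
    (m : ℕ) (hm : 0 < m) (D : Fin m → Curve) (d : Fin m → ℝ) (hd : ∀ i, 0 < d i)
    (hnegdef : ∀ v : Fin m → ℝ, v ≠ 0 →
      β (∑ i, v i • cls (D i)) (∑ i, v i • cls (D i)) < 0)
    (H : V) (hample : ∀ C : Curve, 0 < β H (cls C))
    (q : Fin m → ℝ) (hq : ∀ i, 0 ≤ q i)
    (L₀ Dtot : V)
    (hL₀ : L₀ = H + ∑ i, q i • cls (D i))
    (hDtot : Dtot = ∑ i, d i • cls (D i))
    (hL₀D : ∀ i, β L₀ (cls (D i)) = 0)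
    (hDD : ∀ i, β Dtot (cls (D i)) ≤ 0)
    (hcross : ∀ C : Curve, (∀ i, C ≠ D i) → ∀ i, 0 ≤ β (cls (D i)) (cls C))
    (c : ℝ) (hc0 : 0 ≤ c) (hcε : ∀ i, c ≤ q i / d i) :
    ∀ C : Curve, 0 ≤ β (L₀ - c • Dtot) (cls C) := by
  intro C
  have hβ : β (L₀ - c • Dtot) (cls C) = β L₀ (cls C) - c * β Dtot (cls C) := by
    simp
  rw [hβ]
  by_cases hC : ∃ j, C = D j
  · obtain ⟨j, rfl⟩ := hC
    have h1 := hL₀D j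
    have h2 := hDD j
    nlinarith
  · push_neg at hC
    have hL : β L₀ (cls C) = β H (cls C) + ∑ i, q i * β (cls (D i)) (cls C) := by
      rw [hL₀]; simp
    have hD : β Dtot (cls C) = ∑ i, d i * β (cls (D i)) (cls C) := by
      rw [hDtot]; simp
    have key : c * ∑ i, d i * β (cls (D i)) (cls C) ≤ ∑ i, q i * β (cls (D i)) (cls C) := by
      rw [Finset.mul_sum]
      apply Finset.sum_le_sum
      intro i _
      have hdi := hd i
      have hcd : c * d i ≤ q i := by
        have := hcε i
        rw [le_div_iff₀ hdi] at this
        linarith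
      have hβi := hcross C hC i
      nlinarith
    have hH := hample C
    rw [hL, hD]
    linarith
end
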